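/- Let φ ∈ (−π/3, π/3) and let z ∈ ℂ∖{0} satisfy |arg z − φ| ≤ 2π/3. Then for every s ∈ Υ_φ(z) with s ≠ z: Re(s^{3/2} − z^{3/2}) = cos(3φ/2) · Re((s·e^{−iφ})^{3/2} − (z·e^{−iφ})^{3/2}) > 0, where all powers are principal complex powers. -/
import Mathlib


open Complex Real

/-- The curve `Υ_φ(z)`: points `s ≠ 0` whose argument lies weakly between `arg z`
and `φ`, with `Im((s e^{-iφ})^{3/2})` equal to that of `z` and
`Re((s e^{-iφ})^{3/2})` at least that of `z` (principal powers). -/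
noncomputable def Upsilon (φ : ℝ) (z : ℂ) : Set ℂ :=
  {s : ℂ | s ≠ 0 ∧
    Complex.arg s ∈ Set.Icc (min (Complex.arg z) φ) (max (Complex.arg z) φ) ∧
    ((s * Complex.exp (-(φ : ℂ) * Complex.I)) ^ ((3 : ℂ)/2)).im =
      ((z * Complex.exp (-(φ : ℂ) * Complex.I)) ^ ((3 : ℂ)/2)).im ∧
    ((z * Complex.exp (-(φ : ℂ) * Complex.I)) ^ ((3 : ℂ)/2)).re ≤
      ((s * Complex.exp (-(φ : ℂ) * Complex.I)) ^ ((3 : ℂ)/2)).re}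

lemma rot_cpow (φ : ℝ) (hφ1 : -(π/3) < φ) (hφ2 : φ < π/3) (u : ℂ) (hu : u ≠ 0)
    (h : |Complex.arg u - φ| ≤ 2*π/3) :
    (u * Complex.exp (-(φ : ℂ) * Complex.I)) ^ ((3 : ℂ)/2) =
      u ^ ((3 : ℂ)/2) * Complex.exp ((3 : ℂ)/2 * (-(φ : ℂ) * Complex.I)) := by
  have hπ := Real.pi_pos
  have him : (-(φ : ℂ) * Complex.I).im = -φ := by simp
  have hle : log (Complex.exp (-(φ : ℂ) * Complex.I)) = -(φ : ℂ) * Complex.I :=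
    Complex.log_exp (by rw [him]; linarith) (by rw [him]; linarith)
  have harge : Complex.arg (Complex.exp (-(φ : ℂ) * Complex.I)) = -φ := by
    rw [← Complex.log_im, hle, him]
  have he0 : Complex.exp (-(φ : ℂ) * Complex.I) ≠ 0 := Complex.exp_ne_zero _
  have habs := abs_le.mp h
  have hlog : Complex.log (u * Complex.exp (-(φ : ℂ) * Complex.I)) =
      Complex.log u + (-(φ : ℂ) * Complex.I) := by
    have := Complex.log_mul hu he0 (by
      rw [harge]; exact Set.mem_Ioc.mpr ⟨by linarith [habs.1], by linarith [habs.2]⟩)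
    rw [hle] at this
    exact this
  rw [Complex.cpow_def_of_ne_zero (mul_ne_zero hu he0), Complex.cpow_def_of_ne_zero hu,
    hlog, ← Complex.exp_add]
  ring_nf

theorem stmt13 (φ : ℝ) (hφ : φ ∈ Set.Ioo (-(π/3)) (π/3))
    (z : ℂ) (hz : z ≠ 0) (hargz : |Complex.arg z - φ| ≤ 2*π/3)
    (s : ℂ) (hs : s ∈ Upsilon φ z) (hsz : s ≠ z) :
    (s ^ ((3 : ℂ)/2) - z ^ ((3 : ℂ)/2)).re =
      Real.cos (3*φ/2) *
        ((s * Complex.exp (-(φ : ℂ) * Complex.I)) ^ ((3 : ℂ)/2) -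
          (z * Complex.exp (-(φ : ℂ) * Complex.I)) ^ ((3 : ℂ)/2)).re ∧
    0 < (s ^ ((3 : ℂ)/2) - z ^ ((3 : ℂ)/2)).re := by
  have hπ := Real.pi_pos
  obtain ⟨hs0, ⟨hsl, hsr⟩, him, hre⟩ := hs
  obtain ⟨hφ1, hφ2⟩ := hφ
  have habz := abs_le.mp hargz
  -- arg s bounds
  have hmin : φ - 2*π/3 ≤ min (Complex.arg z) φ := le_min (by linarith [habz.1]) (by linarith)
  have hmax : max (Complex.arg z) φ ≤ φ + 2*π/3 := max_le (by linarith [habz.2]) (by linarith)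
  have hargs : |Complex.arg s - φ| ≤ 2*π/3 := abs_le.mpr ⟨by linarith, by linarith⟩
  -- arg s close to arg z
  have hiz : min (Complex.arg z) φ ≤ Complex.arg z ∧ Complex.arg z ≤ max (Complex.arg z) φ :=
    ⟨min_le_left _ _, le_max_left _ _⟩
  have hsz' : |Complex.arg s - Complex.arg z| ≤ 2*π/3 := by
    have h1 : max (Complex.arg z) φ - min (Complex.arg z) φ = |Complex.arg z - φ| := by
      rw [max_sub_min_eq_abs, abs_sub_comm]
    rw [abs_le]
    constructor <;> nlinarith [hiz.1, hiz.2, abs_nonneg (Complex.arg z - φ)]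
  have Es := rot_cpow φ hφ1 hφ2 s hs0 hargs
  have Ez := rot_cpow φ hφ1 hφ2 z hz hargz
  set E := Complex.exp ((3 : ℂ)/2 * (-(φ : ℂ) * Complex.I)) with hE
  have hE0 : E ≠ 0 := Complex.exp_ne_zero _
  -- the difference of rotated powers is a nonneg real
  set d : ℝ := ((s * Complex.exp (-(φ : ℂ) * Complex.I)) ^ ((3 : ℂ)/2)).re -
      ((z * Complex.exp (-(φ : ℂ) * Complex.I)) ^ ((3 : ℂ)/2)).re with hd
  have hdnn : 0 ≤ d := sub_nonneg.mpr hre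
  have hdiff : (s * Complex.exp (-(φ : ℂ) * Complex.I)) ^ ((3 : ℂ)/2) -
      (z * Complex.exp (-(φ : ℂ) * Complex.I)) ^ ((3 : ℂ)/2) = (d : ℂ) := by
    rw [Complex.ext_iff]
    refine ⟨by simp only [Complex.sub_re, Complex.ofReal_re, hd], ?_⟩
    simp only [Complex.sub_im, Complex.ofReal_im, him, sub_self]
  -- d ≠ 0
  have hdpos : 0 < d := by
    rcases hdnn.lt_or_eq with h | h
    · exact h
    · exfalso
      have h0 : (s * Complex.exp (-(φ : ℂ) * Complex.I)) ^ ((3 : ℂ)/2) =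
          (z * Complex.exp (-(φ : ℂ) * Complex.I)) ^ ((3 : ℂ)/2) := by
        have := hdiff
        rw [← h] at this
        simpa [sub_eq_zero] using this
      rw [Es, Ez] at h0
      have h1 : s ^ ((3 : ℂ)/2) = z ^ ((3 : ℂ)/2) := mul_right_cancel₀ hE0 h0
      · rw [Complex.cpow_def_of_ne_zero hs0, Complex.cpow_def_of_ne_zero hz,
          Complex.exp_eq_exp_iff_exists_int] at h1
        obtain ⟨n, hn⟩ := h1
        have hlog : Complex.log s = Complex.log z + (n : ℂ) * ((4*π/3 : ℝ) : ℂ) * Complex.I := by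
          have h2 : Complex.log s * (3/2) * (2/3 : ℂ) =
              (Complex.log z * (3/2) + n * (2 * π * I)) * (2/3 : ℂ) := by rw [hn]
          push_cast
          push_cast at h2
          ring_nf at h2 ⊢
          linear_combination h2
        have himeq : Complex.arg s = Complex.arg z + (n : ℝ) * (4*π/3) := by
          have := congrArg Complex.im hlog
          simpa [Complex.log_im] using this
        have hn0 : n = 0 := by
          by_contra hn0
          have h1 : (1 : ℝ) ≤ |(n : ℝ)| := by
            have : (1:ℤ) ≤ |n| := Int.one_le_abs hn0
            exact_mod_cast this
          have h2 : |Complex.arg s - Complex.arg z| = |(n : ℝ)| * (4*π/3) := by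
            rw [himeq,
              show Complex.arg z + (n:ℝ) * (4*π/3) - Complex.arg z = (n:ℝ)*(4*π/3) by ring,
              abs_mul, _root_.abs_of_nonneg (by positivity : (0:ℝ) ≤ 4*π/3)]
          nlinarith [hsz', abs_nonneg ((n:ℝ))]
        rw [hn0] at hlog
        simp at hlog
        exact hsz (by rw [← Complex.exp_log hs0, ← Complex.exp_log hz, hlog])
  have hEinv : E⁻¹ = Complex.exp (((3*φ/2 : ℝ) : ℂ) * Complex.I) := by
    rw [hE, ← Complex.exp_neg]
    congr 1
    push_cast
    ring
  have hkey : s ^ ((3:ℂ)/2) - z ^ ((3:ℂ)/2) = (d : ℂ) * E⁻¹ := by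
    have h4 := hdiff
    rw [Es, Ez, ← sub_mul] at h4
    field_simp
    linear_combination h4
  have hres : (s ^ ((3:ℂ)/2) - z ^ ((3:ℂ)/2)).re = d * Real.cos (3*φ/2) := by
    rw [hkey, hEinv]
    simp only [Complex.mul_re, Complex.ofReal_re, Complex.ofReal_im,
      Complex.exp_ofReal_mul_I_re, zero_mul, sub_zero]
  constructor
  · rw [hres, hdiff, Complex.ofReal_re, mul_comm]
  · rw [hres]
    have hc : 0 < Real.cos (3*φ/2) := by
      apply Real.cos_pos_of_mem_Ioo
      rw [Set.mem_Ioo]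
      constructor <;> linarith
    positivity
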